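/- arXiv:1312.2172 — 2 statements merged into one kernel-verified Lean document; each statement's English description precedes it below -/
import Mathlib

section
/- (Product form of a Whittaker–Watson addition formula.) Let q be a complex number with 0 < |q| < 1 and let θ(z;q) = (z, q/z; q)_∞ for z ≠ 0. Then for all nonzero complex numbers w, x, y, z: θ(w²q;q) θ(x²q;q) θ(y²q;q) θ(z²q;q) + θ(−w²q;q) θ(−x²q;q) θ(−y²q;q) θ(−z²q;q) = θ(q x y z / w; q) θ(q w y z / x; q) θ(q w x z / y; q) θ(q w x y / z; q) + θ(−q x y z / w; q) θ(−q w y z / x; q) θ(−q w x z / y; q) θ(−q w x y / z; q). -/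
/-- The q-Pochhammer symbol of infinite order: `(x; Q)_∞ = ∏_{k=0}^∞ (1 - x Q^k)`. -/
noncomputable def qPoch (x Q : ℂ) : ℂ := ∏' k : ℕ, (1 - x * Q ^ k)

/-- The theta function `θ(z; Q) = (z, Q/z; Q)_∞`. -/
noncomputable def theta (z Q : ℂ) : ℂ := qPoch z Q * qPoch (Q / z) Q

/-!
Multiply both sides by `(q; q)_∞⁴` and expand every theta function by the Jacobi triple product
`(q; q)_∞ θ(z; q) = ∑ₙ (-1)ⁿ q^{n(n-1)/2} zⁿ`. The triple product is the limit `N → ∞` of its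
finite form `(z; q)_N (q/z; q)_N = ∑ₙ (-1)ⁿ q^{n(n-1)/2} [2N choose N+n]_q zⁿ` (Tannery's
theorem); the finite form follows from the q-Pascal rule by induction on the length of the
first factor, the symmetry `z ↔ q/z` exchanging the two factors.

Since `θ(±Aq)` has coefficients `(∓1)ⁿ q^{n(n+1)/2} Aⁿ`, each side of the formula becomes a sum
over `v ∈ ℤ⁴` of `(1 + (-1)^{|v|}) q^{∑ vᵢ(vᵢ+1)/2} A^v`, so only `|v| = 2s` even contributes.
On these the involution `vᵢ ↦ s - vᵢ` preserves `∑ vᵢ(vᵢ+1)/2` (this needs exactly four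
variables) and turns `(w², x², y², z²)^v` into `(xyz/w, wyz/x, wxz/y, wxy/z)^v`.
-/

open Finset Filter Topology

namespace QSeries

def tri (n : ℤ) : ℤ := n * (n - 1) / 2

lemma two_mul_tri (n : ℤ) : 2 * tri n = n * (n - 1) :=
  Int.mul_ediv_cancel' (Int.even_mul_pred_self n).two_dvd

lemma tri_add_one (n : ℤ) : tri (n + 1) = tri n + n := by
  have h₁ := two_mul_tri n
  have h₂ := two_mul_tri (n + 1)
  linarith

lemma tri_neg (n : ℤ) : tri (-n) = tri (n + 1) := by
  have h₁ := two_mul_tri (-n)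
  have h₂ := two_mul_tri (n + 1)
  linarith

noncomputable def qPochFin (x Q : ℂ) (n : ℕ) : ℂ := ∏ k ∈ range n, (1 - x * Q ^ k)

lemma qPochFin_zero (x Q : ℂ) : qPochFin x Q 0 = 1 := prod_range_zero _

lemma qPochFin_succ (x Q : ℂ) (n : ℕ) :
    qPochFin x Q (n + 1) = qPochFin x Q n * (1 - x * Q ^ n) :=
  prod_range_succ _ _

variable {q : ℂ}

lemma one_sub_mul_pow_ne_zero {x : ℂ} (hx : ‖x‖ < 1) (hq : ‖q‖ ≤ 1) (k : ℕ) :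
    1 - x * q ^ k ≠ 0 := by
  refine sub_ne_zero.2 fun h => ?_
  have : ‖x * q ^ k‖ < 1 := by
    rw [norm_mul, norm_pow]
    exact (mul_le_of_le_one_right (norm_nonneg x) (pow_le_one₀ (norm_nonneg q) hq)).trans_lt hx
  simp [← h] at this

lemma qPochFin_ne_zero {x : ℂ} (hx : ‖x‖ < 1) (hq : ‖q‖ ≤ 1) (n : ℕ) : qPochFin x q n ≠ 0 :=
  prod_ne_zero_iff.2 fun k _ => one_sub_mul_pow_ne_zero hx hq k

lemma summable_norm_mul_pow (hq : ‖q‖ < 1) (x : ℂ) : Summable fun k : ℕ => ‖-(x * q ^ k)‖ := by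
  simpa [norm_mul, norm_pow] using (summable_geometric_of_lt_one (norm_nonneg q) hq).mul_left ‖x‖

lemma tendsto_qPochFin (hq : ‖q‖ < 1) (x : ℂ) :
    Tendsto (qPochFin x q) atTop (𝓝 (qPoch x q)) := by
  have := (multipliable_one_add_of_summable (summable_norm_mul_pow hq x)).hasProd.tendsto_prod_nat
  simp only [← sub_eq_add_neg] at this
  exact this

lemma qPoch_ne_zero {x : ℂ} (hx : ‖x‖ < 1) (hq : ‖q‖ < 1) : qPoch x q ≠ 0 := by
  have := tprod_one_add_ne_zero_of_summable
    (fun k => by simpa only [← sub_eq_add_neg] using one_sub_mul_pow_ne_zero hx hq.le k)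
    (summable_norm_mul_pow hq x)
  simp only [← sub_eq_add_neg] at this
  exact this

/-- The Gaussian binomial coefficient `[i + j choose i]_q`, indexed by its two parts and
extended by zero when a part is negative. -/
noncomputable def gaussBinom (q : ℂ) (i j : ℤ) : ℂ :=
  if 0 ≤ i ∧ 0 ≤ j then
    qPochFin q q (i + j).toNat / (qPochFin q q i.toNat * qPochFin q q j.toNat)
  else 0

lemma gaussBinom_comm (i j : ℤ) : gaussBinom q i j = gaussBinom q j i := by
  simp only [gaussBinom, add_comm i j, and_comm, mul_comm (qPochFin q q i.toNat)]

lemma gaussBinom_of_neg_left {i : ℤ} (j : ℤ) (hi : i < 0) : gaussBinom q i j = 0 :=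
  if_neg (by omega)

lemma gaussBinom_of_neg_right (i : ℤ) {j : ℤ} (hj : j < 0) : gaussBinom q i j = 0 :=
  if_neg (by omega)

lemma gaussBinom_natCast (i j : ℕ) :
    gaussBinom q i j = qPochFin q q (i + j) / (qPochFin q q i * qPochFin q q j) := by
  rw [gaussBinom, if_pos ⟨by positivity, by positivity⟩, ← Nat.cast_add]
  simp only [Int.toNat_natCast]

lemma gaussBinom_zero_left (hq : ‖q‖ < 1) {j : ℤ} (hj : 0 ≤ j) : gaussBinom q 0 j = 1 := by
  lift j to ℕ using hj
  rw [← Nat.cast_zero, gaussBinom_natCast, zero_add, qPochFin_zero, one_mul,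
    div_self (qPochFin_ne_zero hq hq.le j)]

lemma gaussBinom_zero_right (hq : ‖q‖ < 1) {i : ℤ} (hi : 0 ≤ i) : gaussBinom q i 0 = 1 := by
  rw [gaussBinom_comm, gaussBinom_zero_left hq hi]

lemma gaussBinom_pascal_natCast (hq : ‖q‖ < 1) (i j : ℕ) :
    gaussBinom q (i + 1 : ℕ) (j + 1 : ℕ)
      = gaussBinom q (i + 1 : ℕ) j + q ^ (j + 1) * gaussBinom q i (j + 1 : ℕ) := by
  simp only [gaussBinom_natCast]
  rw [show i + 1 + (j + 1) = i + j + 1 + 1 by ring, show i + 1 + j = i + j + 1 by ring,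
    show i + (j + 1) = i + j + 1 by ring, qPochFin_succ q q (i + j + 1), qPochFin_succ q q i,
    qPochFin_succ q q j]
  have := qPochFin_ne_zero hq hq.le i
  have := qPochFin_ne_zero hq hq.le j
  have := qPochFin_ne_zero hq hq.le (i + j + 1)
  have := one_sub_mul_pow_ne_zero hq hq.le i
  have := one_sub_mul_pow_ne_zero hq hq.le j
  field_simp
  ring

lemma gaussBinom_pascal (hq : ‖q‖ < 1) {i j : ℤ} (h : 0 ≤ i + j) :
    gaussBinom q i (j + 1) = gaussBinom q i j + q ^ (j + 1) * gaussBinom q (i - 1) (j + 1) := by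
  rcases lt_trichotomy i 0 with hi | rfl | hi
  · simp only [gaussBinom_of_neg_left _ hi, gaussBinom_of_neg_left _ (by omega : i - 1 < 0)]
    ring
  · rw [gaussBinom_zero_left hq (by omega), gaussBinom_zero_left hq (by omega),
      gaussBinom_of_neg_left _ (by norm_num)]
    ring
  rcases lt_trichotomy j (-1) with hj | rfl | hj
  · simp only [gaussBinom_of_neg_right _ (by omega : j + 1 < 0),
      gaussBinom_of_neg_right _ (by omega : j < 0)]
    ring
  · rw [neg_add_cancel, gaussBinom_zero_right hq hi.le, gaussBinom_of_neg_right _ (by norm_num),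
      gaussBinom_zero_right hq (by omega)]
    simp
  obtain ⟨i, rfl⟩ : ∃ i' : ℕ, i = (i' + 1 : ℕ) := ⟨(i - 1).toNat, by omega⟩
  lift j to ℕ using (by omega)
  have := gaussBinom_pascal_natCast (q := q) hq i j
  push_cast at this ⊢
  rw [add_sub_cancel_right, this, ← zpow_natCast]
  push_cast
  ring

lemma exists_norm_gaussBinom_le (hq : ‖q‖ < 1) : ∃ C, ∀ i j, ‖gaussBinom q i j‖ ≤ C := by
  obtain ⟨A, hA⟩ := (tendsto_qPochFin hq q).norm.bddAbove_range
  obtain ⟨B, hB⟩ := ((tendsto_qPochFin hq q).inv₀ (qPoch_ne_zero hq hq)).norm.bddAbove_range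
  have hA₀ : 0 ≤ A := (norm_nonneg _).trans (hA ⟨0, rfl⟩)
  have hB₀ : 0 ≤ B := (norm_nonneg _).trans (hB ⟨0, rfl⟩)
  refine ⟨A * (B * B), fun i j => ?_⟩
  unfold gaussBinom
  split_ifs
  · rw [div_eq_mul_inv, mul_inv, norm_mul, norm_mul]
    gcongr
    exacts [hA ⟨_, rfl⟩, hB ⟨_, rfl⟩, hB ⟨_, rfl⟩]
  · rw [norm_zero]
    positivity

lemma tendsto_gaussBinom (hq : ‖q‖ < 1) (n : ℤ) :
    Tendsto (fun N : ℕ => gaussBinom q (N + n) (N - n)) atTop (𝓝 (qPoch q q)⁻¹) := by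
  have hP := qPoch_ne_zero hq hq
  have hE : ∀ f : ℕ → ℤ, (∀ N : ℕ, (N : ℤ) - n.natAbs ≤ f N) →
      Tendsto (fun N => qPochFin q q (f N).toNat) atTop (𝓝 (qPoch q q)) := fun f hf =>
    (tendsto_qPochFin hq q).comp
      (tendsto_atTop_atTop.2 fun b => ⟨b + n.natAbs, fun N hN => by have := hf N; omega⟩)
  have hlim := (hE (fun N => N + n + (N - n)) fun N => by omega).div
    ((hE (fun N => N + n) fun N => by omega).mul (hE (fun N => N - n) fun N => by omega))
    (mul_ne_zero hP hP)
  rw [div_mul_cancel_left₀ hP] at hlim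
  refine hlim.congr' ?_
  filter_upwards [eventually_ge_atTop n.natAbs] with N hN
  rw [gaussBinom, if_pos (by omega)]
  rfl

noncomputable def jacobiTerm (q z : ℂ) (n : ℤ) : ℂ := (-1) ^ n * q ^ tri n * z ^ n

lemma jacobiTerm_ne_zero (hq₀ : q ≠ 0) {z : ℂ} (hz : z ≠ 0) (n : ℤ) : jacobiTerm q z n ≠ 0 := by
  unfold jacobiTerm
  exact mul_ne_zero (mul_ne_zero (zpow_ne_zero _ (by norm_num)) (zpow_ne_zero _ hq₀))
    (zpow_ne_zero _ hz)

lemma jacobiTerm_add_one (hq₀ : q ≠ 0) {z : ℂ} (hz : z ≠ 0) (n : ℤ) :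
    jacobiTerm q z (n + 1) = -(z * q ^ n) * jacobiTerm q z n := by
  rw [jacobiTerm, jacobiTerm, tri_add_one, zpow_add_one₀ (by norm_num), zpow_add₀ hq₀,
    zpow_add_one₀ hz]
  ring

lemma jacobiTerm_neg (hq₀ : q ≠ 0) {z w : ℂ} (hzw : z * w = q) (n : ℤ) :
    jacobiTerm q z (-n) = jacobiTerm q w n := by
  rw [jacobiTerm, jacobiTerm, tri_neg, tri_add_one, zpow_add₀ hq₀, ← hzw]
  have hzn : z ^ n ≠ 0 := zpow_ne_zero _ (left_ne_zero_of_mul (hzw ▸ hq₀))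
  rw [zpow_neg, ← inv_zpow, inv_neg_one, zpow_neg z, mul_zpow, mul_zpow]
  field_simp

lemma summable_norm_jacobiTerm_natCast (hq₀ : q ≠ 0) (hq : ‖q‖ < 1) {z : ℂ} (hz : z ≠ 0) :
    Summable fun n : ℕ => ‖jacobiTerm q z n‖ := by
  refine summable_of_ratio_test_tendsto_lt_one zero_lt_one
    (Eventually.of_forall fun n => norm_ne_zero_iff.2 (jacobiTerm_ne_zero hq₀ hz n)) ?_
  have hratio : ∀ n : ℕ, ‖‖jacobiTerm q z (n + 1 : ℕ)‖‖ / ‖‖jacobiTerm q z n‖‖ = ‖q‖ ^ n * ‖z‖ := by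
    intro n
    rw [norm_norm, norm_norm, Nat.cast_succ, jacobiTerm_add_one hq₀ hz, norm_mul,
      mul_div_cancel_right₀ _ (norm_ne_zero_iff.2 (jacobiTerm_ne_zero hq₀ hz n)), norm_neg,
      norm_mul, zpow_natCast, norm_pow, mul_comm]
  simp only [hratio]
  simpa using (tendsto_pow_atTop_nhds_zero_of_lt_one (norm_nonneg q) hq).mul_const ‖z‖

lemma summable_norm_jacobiTerm (hq₀ : q ≠ 0) (hq : ‖q‖ < 1) {z : ℂ} (hz : z ≠ 0) :
    Summable fun n : ℤ => ‖jacobiTerm q z n‖ := by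
  have hzw : z * (q / z) = q := mul_div_cancel₀ q hz
  refine .of_nat_of_neg (summable_norm_jacobiTerm_natCast hq₀ hq hz) ?_
  simpa only [jacobiTerm_neg hq₀ hzw] using
    summable_norm_jacobiTerm_natCast hq₀ hq (div_ne_zero hq₀ hz)

lemma jacobiTerm_mul_gaussBinom_succ (hq₀ : q ≠ 0) (hq : ‖q‖ < 1) {z : ℂ} (hz : z ≠ 0)
    (a b : ℕ) (n : ℤ) :
    jacobiTerm q z n * gaussBinom q (b + n) ((a + 1 : ℕ) - n)
      = jacobiTerm q z n * gaussBinom q (b + n) (a - n)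
        - z * q ^ a * (jacobiTerm q z (n - 1) * gaussBinom q (b + (n - 1)) (a - (n - 1))) := by
  have hpascal := gaussBinom_pascal (q := q) hq (i := b + n) (j := a - n) (by omega)
  have hterm := jacobiTerm_add_one hq₀ hz (n - 1)
  have hpow : q ^ (n - 1) * q ^ ((a : ℤ) - (n - 1)) = q ^ a := by
    rw [← zpow_add₀ hq₀, add_sub_cancel, zpow_natCast]
  rw [sub_add_cancel] at hterm
  rw [show ((a + 1 : ℕ) : ℤ) - n = a - n + 1 by push_cast; ring, hpascal,
    show (b : ℤ) + n - 1 = b + (n - 1) by ring, show (a : ℤ) - n + 1 = a - (n - 1) by ring]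
  linear_combination (q ^ ((a : ℤ) - (n - 1)) * gaussBinom q (b + (n - 1)) (a - (n - 1))) * hterm
    - z * jacobiTerm q z (n - 1) * gaussBinom q (b + (n - 1)) (a - (n - 1)) * hpow

def FiniteTripleProduct (q : ℂ) (a b : ℕ) (z w : ℂ) : Prop :=
  HasSum (fun n : ℤ => jacobiTerm q z n * gaussBinom q (b + n) (a - n))
    (qPochFin z q a * qPochFin w q b)

lemma finiteTripleProduct_zero_zero (hq : ‖q‖ < 1) (z w : ℂ) : FiniteTripleProduct q 0 0 z w := by
  have hsingle := hasSum_single (f := fun n : ℤ =>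
      jacobiTerm q z n * gaussBinom q ((0 : ℕ) + n) ((0 : ℕ) - n)) 0 fun n hn => by
    rcases hn.lt_or_gt with hn | hn
    · simp [gaussBinom_of_neg_left _ hn]
    · simp [gaussBinom_of_neg_right _ (neg_lt_zero.2 hn)]
  simpa [FiniteTripleProduct, qPochFin_zero, jacobiTerm, tri, gaussBinom_zero_left hq] using hsingle

lemma FiniteTripleProduct.succ_left (hq₀ : q ≠ 0) (hq : ‖q‖ < 1) {a b : ℕ} {z w : ℂ}
    (hzw : z * w = q) (h : FiniteTripleProduct q a b z w) :
    FiniteTripleProduct q (a + 1) b z w := by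
  have hz : z ≠ 0 := left_ne_zero_of_mul (hzw ▸ hq₀)
  have hshift := (Equiv.subRight (1 : ℤ)).hasSum_iff.2 h
  unfold FiniteTripleProduct
  simp_rw [jacobiTerm_mul_gaussBinom_succ hq₀ hq hz, qPochFin_succ]
  have key := h.sub (hshift.mul_left (z * q ^ a))
  rwa [show qPochFin z q a * qPochFin w q b - z * q ^ a * (qPochFin z q a * qPochFin w q b)
    = qPochFin z q a * (1 - z * q ^ a) * qPochFin w q b by ring] at key

lemma FiniteTripleProduct.swap (hq₀ : q ≠ 0) {a b : ℕ} {z w : ℂ} (hzw : z * w = q)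
    (h : FiniteTripleProduct q a b z w) : FiniteTripleProduct q b a w z := by
  unfold FiniteTripleProduct
  rw [mul_comm]
  refine (Equiv.neg ℤ).hasSum_iff.1 (h.congr_fun fun n => ?_)
  rw [Function.comp_apply, Equiv.neg_apply, jacobiTerm_neg hq₀ (mul_comm w z ▸ hzw),
    gaussBinom_comm, ← sub_eq_add_neg, sub_neg_eq_add]

theorem finiteTripleProduct (hq₀ : q ≠ 0) (hq : ‖q‖ < 1) {z w : ℂ} (hzw : z * w = q) (a b : ℕ) :
    FiniteTripleProduct q a b z w := by
  induction b generalizing a z w with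
  | zero =>
    induction a with
    | zero => exact finiteTripleProduct_zero_zero hq z w
    | succ a ih => exact ih.succ_left hq₀ hq hzw
  | succ b ih =>
    have hwz : w * z = q := mul_comm w z ▸ hzw
    exact (((ih hzw a).swap hq₀ hzw).succ_left hq₀ hq hwz).swap hq₀ hwz

theorem hasSum_jacobiTerm (hq₀ : q ≠ 0) (hq : ‖q‖ < 1) {z : ℂ} (hz : z ≠ 0) :
    HasSum (jacobiTerm q z) (qPoch q q * theta z q) := by
  obtain ⟨C, hC⟩ := exists_norm_gaussBinom_le hq
  have hsum := summable_norm_jacobiTerm hq₀ hq hz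
  have hfin : ∀ N : ℕ, qPochFin z q N * qPochFin (q / z) q N
      = ∑' n : ℤ, jacobiTerm q z n * gaussBinom q (N + n) (N - n) := fun N =>
    (finiteTripleProduct hq₀ hq (mul_div_cancel₀ q hz) N N).tsum_eq.symm
  have hprod : Tendsto (fun N => qPochFin z q N * qPochFin (q / z) q N) atTop
      (𝓝 (theta z q)) :=
    (tendsto_qPochFin hq z).mul (tendsto_qPochFin hq (q / z))
  have hseries : Tendsto (fun N : ℕ => ∑' n : ℤ, jacobiTerm q z n * gaussBinom q (N + n) (N - n))
      atTop (𝓝 (∑' n : ℤ, jacobiTerm q z n * (qPoch q q)⁻¹)) :=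
    tendsto_tsum_of_dominated_convergence (hsum.mul_right C)
      (fun n => tendsto_const_nhds.mul (tendsto_gaussBinom hq n))
      (Eventually.of_forall fun N n => by
        rw [norm_mul]; exact mul_le_mul_of_nonneg_left (hC _ _) (norm_nonneg _))
  have htheta : theta z q = (∑' n : ℤ, jacobiTerm q z n) * (qPoch q q)⁻¹ := by
    rw [← tsum_mul_right]
    exact tendsto_nhds_unique (hprod.congr hfin) hseries
  rw [htheta, mul_comm, inv_mul_cancel_right₀ (qPoch_ne_zero hq hq)]
  exact hsum.of_norm.hasSum

lemma tsum_mul_tsum_mul_tsum_mul_tsum {R ι : Type*} [NormedRing R] [CompleteSpace R]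
    {f g h k : ι → R} (hf : Summable (‖f ·‖)) (hg : Summable (‖g ·‖)) (hh : Summable (‖h ·‖))
    (hk : Summable (‖k ·‖)) :
    ((∑' i, f i) * ∑' i, g i) * ((∑' i, h i) * ∑' i, k i)
      = ∑' v : (ι × ι) × (ι × ι), (f v.1.1 * g v.1.2) * (h v.2.1 * k v.2.2) := by
  rw [tsum_mul_tsum_of_summable_norm hf hg, tsum_mul_tsum_of_summable_norm hh hk,
    tsum_mul_tsum_of_summable_norm (hf.mul_norm hg) (hh.mul_norm hk)]

lemma qPoch_pow_four_mul_theta (hq₀ : q ≠ 0) (hq : ‖q‖ < 1) {Z₁ Z₂ Z₃ Z₄ : ℂ}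
    (h₁ : Z₁ ≠ 0) (h₂ : Z₂ ≠ 0) (h₃ : Z₃ ≠ 0) (h₄ : Z₄ ≠ 0) :
    qPoch q q ^ 4 * (theta Z₁ q * theta Z₂ q * theta Z₃ q * theta Z₄ q)
      = ∑' v : (ℤ × ℤ) × (ℤ × ℤ), (jacobiTerm q Z₁ v.1.1 * jacobiTerm q Z₂ v.1.2)
          * (jacobiTerm q Z₃ v.2.1 * jacobiTerm q Z₄ v.2.2) := by
  rw [← tsum_mul_tsum_mul_tsum_mul_tsum (summable_norm_jacobiTerm hq₀ hq h₁)
    (summable_norm_jacobiTerm hq₀ hq h₂) (summable_norm_jacobiTerm hq₀ hq h₃)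
    (summable_norm_jacobiTerm hq₀ hq h₄), (hasSum_jacobiTerm hq₀ hq h₁).tsum_eq,
    (hasSum_jacobiTerm hq₀ hq h₂).tsum_eq, (hasSum_jacobiTerm hq₀ hq h₃).tsum_eq,
    (hasSum_jacobiTerm hq₀ hq h₄).tsum_eq]
  ring

lemma summable_jacobiTerm_quad (hq₀ : q ≠ 0) (hq : ‖q‖ < 1) {Z₁ Z₂ Z₃ Z₄ : ℂ}
    (h₁ : Z₁ ≠ 0) (h₂ : Z₂ ≠ 0) (h₃ : Z₃ ≠ 0) (h₄ : Z₄ ≠ 0) :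
    Summable fun v : (ℤ × ℤ) × (ℤ × ℤ) => (jacobiTerm q Z₁ v.1.1 * jacobiTerm q Z₂ v.1.2)
      * (jacobiTerm q Z₃ v.2.1 * jacobiTerm q Z₄ v.2.2) :=
  (((summable_norm_jacobiTerm hq₀ hq h₁).mul_norm (summable_norm_jacobiTerm hq₀ hq h₂)).mul_norm
    ((summable_norm_jacobiTerm hq₀ hq h₃).mul_norm (summable_norm_jacobiTerm hq₀ hq h₄))).of_norm

lemma jacobiTerm_mul_q (hq₀ : q ≠ 0) (A : ℂ) (m : ℤ) :
    jacobiTerm q (A * q) m = (-1) ^ m * (q ^ tri (m + 1) * A ^ m) := by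
  rw [jacobiTerm, mul_zpow, tri_add_one, zpow_add₀ hq₀]
  ring

lemma jacobiTerm_neg_mul_q (hq₀ : q ≠ 0) (A : ℂ) (m : ℤ) :
    jacobiTerm q (-(A * q)) m = q ^ tri (m + 1) * A ^ m := by
  have hsq : (-1 : ℂ) ^ m * (-1) ^ m = 1 := by rw [← mul_zpow]; norm_num
  rw [← neg_mul, jacobiTerm_mul_q hq₀, neg_eq_neg_one_mul A, mul_zpow]
  linear_combination (q ^ tri (m + 1) * A ^ m) * hsq

/-- The terms of `(q; q)_∞⁴ (θ(A₁q)⋯θ(A₄q) + θ(-A₁q)⋯θ(-A₄q))` as a series over `ℤ⁴`. -/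
noncomputable def addFormulaTerm (q A₁ A₂ A₃ A₄ : ℂ) : (ℤ × ℤ) × (ℤ × ℤ) → ℂ
  | ((a, b), (c, d)) => (1 + (-1) ^ (a + b + c + d))
      * q ^ (tri (a + 1) + tri (b + 1) + tri (c + 1) + tri (d + 1))
      * (A₁ ^ a * A₂ ^ b * A₃ ^ c * A₄ ^ d)

lemma qPoch_pow_four_mul_theta_add (hq₀ : q ≠ 0) (hq : ‖q‖ < 1) {A₁ A₂ A₃ A₄ : ℂ}
    (h₁ : A₁ ≠ 0) (h₂ : A₂ ≠ 0) (h₃ : A₃ ≠ 0) (h₄ : A₄ ≠ 0) :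
    qPoch q q ^ 4 * (theta (A₁ * q) q * theta (A₂ * q) q * theta (A₃ * q) q * theta (A₄ * q) q
      + theta (-(A₁ * q)) q * theta (-(A₂ * q)) q * theta (-(A₃ * q)) q * theta (-(A₄ * q)) q)
      = ∑' v, addFormulaTerm q A₁ A₂ A₃ A₄ v := by
  have hpos : ∀ {A : ℂ}, A ≠ 0 → A * q ≠ 0 := fun h => mul_ne_zero h hq₀
  have hneg : ∀ {A : ℂ}, A ≠ 0 → -(A * q) ≠ 0 := fun h => neg_ne_zero.2 (hpos h)
  rw [mul_add, qPoch_pow_four_mul_theta hq₀ hq (hpos h₁) (hpos h₂) (hpos h₃) (hpos h₄),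
    qPoch_pow_four_mul_theta hq₀ hq (hneg h₁) (hneg h₂) (hneg h₃) (hneg h₄),
    ← (summable_jacobiTerm_quad hq₀ hq (hpos h₁) (hpos h₂) (hpos h₃) (hpos h₄)).tsum_add
      (summable_jacobiTerm_quad hq₀ hq (hneg h₁) (hneg h₂) (hneg h₃) (hneg h₄))]
  refine tsum_congr fun ⟨⟨a, b⟩, c, d⟩ => ?_
  simp only [jacobiTerm_mul_q hq₀, jacobiTerm_neg_mul_q hq₀, addFormulaTerm, zpow_add₀ hq₀,
    zpow_add₀ (by norm_num : (-1 : ℂ) ≠ 0)]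
  ring

def reflect : (ℤ × ℤ) × (ℤ × ℤ) → (ℤ × ℤ) × (ℤ × ℤ)
  | ((a, b), (c, d)) =>
    if Even (a + b + c + d) then
      let s := (a + b + c + d) / 2
      ((s - a, s - b), (s - c, s - d))
    else ((a, b), (c, d))

lemma reflect_of_even {a b c d s : ℤ} (hs : a + b + c + d = s + s) :
    reflect ((a, b), (c, d)) = ((s - a, s - b), (s - c, s - d)) := by
  have hhalf : (s + s) / 2 = s := by omega
  simp only [reflect, hs, hhalf]
  exact if_pos ⟨s, rfl⟩

lemma reflect_involutive : Function.Involutive reflect := by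
  rintro ⟨⟨a, b⟩, c, d⟩
  by_cases h : Even (a + b + c + d)
  · obtain ⟨s, hs⟩ := h
    rw [reflect_of_even hs, reflect_of_even (s := s) (by omega)]
    simp
  · simp only [reflect, if_neg h]

lemma tri_reflect {a b c d s : ℤ} (hs : a + b + c + d = s + s) :
    tri (s - a + 1) + tri (s - b + 1) + tri (s - c + 1) + tri (s - d + 1)
      = tri (a + 1) + tri (b + 1) + tri (c + 1) + tri (d + 1) := by
  suffices 2 * (tri (s - a + 1) + tri (s - b + 1) + tri (s - c + 1) + tri (s - d + 1))
      = 2 * (tri (a + 1) + tri (b + 1) + tri (c + 1) + tri (d + 1)) by omega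
  simp only [mul_add, two_mul_tri]
  linear_combination (-2 * s - 2) * hs

lemma sq_zpow_reflect {w x y z : ℂ} (hw : w ≠ 0) (hx : x ≠ 0) (hy : y ≠ 0) (hz : z ≠ 0)
    {a b c d s : ℤ} (hs : a + b + c + d = s + s) :
    (w ^ 2) ^ (s - a) * (x ^ 2) ^ (s - b) * (y ^ 2) ^ (s - c) * (z ^ 2) ^ (s - d)
      = (x * y * z / w) ^ a * (w * y * z / x) ^ b * (w * x * z / y) ^ c
          * (w * x * y / z) ^ d := by
  simp only [← zpow_natCast _ 2, ← zpow_mul, Nat.cast_ofNat]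
  rw [show 2 * (s - a) = b + c + d - a by omega, show 2 * (s - b) = a + c + d - b by omega,
    show 2 * (s - c) = a + b + d - c by omega, show 2 * (s - d) = a + b + c - d by omega]
  simp only [div_zpow, mul_zpow, zpow_sub₀ hw, zpow_sub₀ hx, zpow_sub₀ hy, zpow_sub₀ hz,
    zpow_add₀ hw, zpow_add₀ hx, zpow_add₀ hy, zpow_add₀ hz]
  field_simp

lemma addFormulaTerm_reflect {w x y z : ℂ} (hw : w ≠ 0) (hx : x ≠ 0) (hy : y ≠ 0) (hz : z ≠ 0)
    (v : (ℤ × ℤ) × (ℤ × ℤ)) :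
    addFormulaTerm q (w ^ 2) (x ^ 2) (y ^ 2) (z ^ 2) (reflect v)
      = addFormulaTerm q (x * y * z / w) (w * y * z / x) (w * x * z / y) (w * x * y / z) v := by
  obtain ⟨⟨a, b⟩, c, d⟩ := v
  by_cases h : Even (a + b + c + d)
  · obtain ⟨s, hs⟩ := h
    rw [reflect_of_even hs]
    simp only [addFormulaTerm]
    rw [tri_reflect hs, sq_zpow_reflect hw hx hy hz hs, Even.neg_one_zpow ⟨s, hs⟩,
      Even.neg_one_zpow ⟨s, by omega⟩]
  · simp only [reflect, if_neg h, addFormulaTerm, (Int.not_even_iff_odd.1 h).neg_one_zpow]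
    ring

end QSeries

open QSeries

/-- Product form of the Whittaker–Watson addition formula
`ϑ₁(w)ϑ₁(x)ϑ₁(y)ϑ₁(z) + ϑ₂(w)ϑ₂(x)ϑ₂(y)ϑ₂(z)
  = ϑ₁(w')ϑ₁(x')ϑ₁(y')ϑ₁(z') + ϑ₂(w')ϑ₂(x')ϑ₂(y')ϑ₂(z')`. -/
theorem whittaker_watson_addition (q : ℂ) (hq0 : q ≠ 0) (hq : ‖q‖ < 1)
    (w x y z : ℂ) (hw : w ≠ 0) (hx : x ≠ 0) (hy : y ≠ 0) (hz : z ≠ 0) :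
    theta (w ^ 2 * q) q * theta (x ^ 2 * q) q * theta (y ^ 2 * q) q * theta (z ^ 2 * q) q
      + theta (-(w ^ 2 * q)) q * theta (-(x ^ 2 * q)) q
          * theta (-(y ^ 2 * q)) q * theta (-(z ^ 2 * q)) q
      = theta (q * x * y * z / w) q * theta (q * w * y * z / x) q
          * theta (q * w * x * z / y) q * theta (q * w * x * y / z) q
        + theta (-(q * x * y * z / w)) q * theta (-(q * w * y * z / x)) q
            * theta (-(q * w * x * z / y)) q * theta (-(q * w * x * y / z)) q := by
  rw [show q * x * y * z / w = x * y * z / w * q by ring,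
    show q * w * y * z / x = w * y * z / x * q by ring,
    show q * w * x * z / y = w * x * z / y * q by ring,
    show q * w * x * y / z = w * x * y / z * q by ring]
  refine mul_left_cancel₀ (pow_ne_zero 4 (qPoch_ne_zero hq hq)) ?_
  rw [qPoch_pow_four_mul_theta_add hq0 hq (by simpa) (by simpa) (by simpa) (by simpa),
    qPoch_pow_four_mul_theta_add hq0 hq (by simp [*]) (by simp [*]) (by simp [*]) (by simp [*]),
    ← (reflect_involutive.toPerm _).tsum_eq]
  exact tsum_congr fun v => addFormulaTerm_reflect hw hx hy hz v
end

section
/- (Product form of a second Whittaker–Watson addition formula.) Let q be a complex number with 0 < |q| < 1 and let θ(z;q²) = (z, q²/z; q²)_∞ for z ≠ 0. Then for all nonzero complex numbers w, x, y, z: 2 θ(−qw²;q²) θ(−qx²;q²) θ(−qy²;q²) θ(−qz²;q²) = −q w x y z · θ(q² x y z / w; q²) θ(q² w y z / x; q²) θ(q² w x z / y; q²) θ(q² w x y / z; q²) + q w x y z · θ(−q² x y z / w; q²) θ(−q² w y z / x; q²) θ(−q² w x z / y; q²) θ(−q² w x y / z; q²) + θ(−q x y z / w; q²) θ(−q w y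 z / x; q²) θ(−q w x z / y; q²) θ(−q w x y / z; q²) + θ(q x y z / w; q²) θ(q w y z / x; q²) θ(q w x z / y; q²) θ(q w x y / z; q²). -/
/-!
By the Jacobi triple product, `(q²; q²)_∞ θ(-qt; q²) = ∑ₙ q^(n²) tⁿ`. Multiplying the identity
by `(q²; q²)_∞⁴` therefore turns each product of four thetas into a sum over `v ∈ ℤ⁴` of
`q^(Σ vᵢ²) ∏ tᵢ^(vᵢ)`. On the right the four sums have the same terms (with `tᵢ = wxyz / sᵢ²`)
up to the factors `(-q)^σ`, `q^σ`, `1`, `(-1)^σ`, where `σ = Σ vᵢ`; with their coefficients these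
add up to `2` for even `σ` and to `2qwxyz · q^σ` for odd `σ`. The reflection `v ↦ ⌈σ/2⌉ - v` is a
bijection of `ℤ⁴` carrying exactly these terms to twice the terms of the left-hand sum.

The triple product is the limit `N → ∞` of its finite form, which is the q-binomial theorem
applied to `2N` consecutive factors; the Gaussian binomials `[2N, N + n]_{q²}` tend to
`1 / (q²; q²)_∞` and are bounded uniformly, so Tannery's theorem passes to the limit.
-/

open Filter Topology Finset

section GaussianBinomial

variable {R : Type*} [CommRing R]

def qPochFin (x Q : R) (n : ℕ) : R := ∏ k ∈ range n, (1 - x * Q ^ k)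

@[simp] lemma qPochFin_zero (x Q : R) : qPochFin x Q 0 = 1 := prod_range_zero _

lemma qPochFin_succ (x Q : R) (n : ℕ) : qPochFin x Q (n + 1) = qPochFin x Q n * (1 - x * Q ^ n) :=
  prod_range_succ _ _

def qBinom (Q : R) : ℕ → ℕ → R
  | _, 0 => 1
  | 0, _ + 1 => 0
  | m + 1, k + 1 => qBinom Q m k + Q ^ (k + 1) * qBinom Q m (k + 1)

variable (Q : R)

@[simp] lemma qBinom_zero_right (m : ℕ) : qBinom Q m 0 = 1 := by cases m <;> rfl

@[simp] lemma qBinom_zero_succ (k : ℕ) : qBinom Q 0 (k + 1) = 0 := rfl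

lemma qBinom_succ_succ (m k : ℕ) :
    qBinom Q (m + 1) (k + 1) = qBinom Q m k + Q ^ (k + 1) * qBinom Q m (k + 1) := rfl

lemma qBinom_eq_zero_of_lt {m k : ℕ} (h : m < k) : qBinom Q m k = 0 := by
  induction m generalizing k with
  | zero => obtain ⟨k, rfl⟩ := Nat.exists_eq_add_of_lt h; rfl
  | succ m ih =>
    obtain ⟨k, rfl⟩ := Nat.exists_eq_add_of_lt h
    rw [qBinom_succ_succ, ih (by omega), ih (by omega), mul_zero, add_zero]

@[simp] lemma qBinom_self (m : ℕ) : qBinom Q m m = 1 := by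
  induction m with
  | zero => rfl
  | succ m ih =>
    rw [qBinom_succ_succ, ih, qBinom_eq_zero_of_lt Q m.lt_succ_self, mul_zero, add_zero]

theorem prod_one_add_mul_pow_eq_sum_qBinom (z : R) (M : ℕ) :
    ∏ i ∈ range M, (1 + z * Q ^ i)
      = ∑ k ∈ range (M + 1), qBinom Q M k * Q ^ k.choose 2 * z ^ k := by
  induction M generalizing z with
  | zero => simp
  | succ M ih =>
    have hchoose (k : ℕ) : Q ^ (k + 1).choose 2 = Q ^ k.choose 2 * Q ^ k := by
      rw [Nat.choose_succ_succ, Nat.choose_one_right, pow_add, mul_comm]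
    set S := ∑ k ∈ range (M + 1), qBinom Q M k * Q ^ k.choose 2 * (z * Q) ^ k with hS
    have hlow : ∑ k ∈ range (M + 1), qBinom Q M k * Q ^ (k + 1).choose 2 * z ^ (k + 1) = z * S := by
      rw [mul_sum]
      refine sum_congr rfl fun k _ ↦ ?_
      rw [hchoose]
      ring
    have hhigh : ∑ k ∈ range (M + 1),
        Q ^ (k + 1) * qBinom Q M (k + 1) * Q ^ (k + 1).choose 2 * z ^ (k + 1) = S - 1 := by
      rw [sum_range_succ, qBinom_eq_zero_of_lt Q M.lt_succ_self, hS, sum_range_succ' _ M,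
        eq_sub_iff_add_eq]
      simp only [hchoose, mul_pow, mul_zero, zero_mul, add_zero, qBinom_zero_right,
        Nat.choose_zero_succ, pow_zero, mul_one, add_left_inj]
      refine sum_congr rfl fun k _ ↦ ?_
      ring
    rw [prod_range_succ']
    simp_rw [pow_succ' Q, ← mul_assoc z Q]
    rw [ih, sum_range_succ' _ (M + 1)]
    simp only [qBinom_succ_succ, add_mul, sum_add_distrib, hlow, hhigh, pow_zero, mul_one,
      qBinom_zero_right, Nat.choose_zero_succ]
    ring

lemma qBinom_add_mul_qPochFin (k l : ℕ) :
    qBinom Q (k + l) k * qPochFin Q Q k * qPochFin Q Q l = qPochFin Q Q (k + l) := by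
  induction k generalizing l with
  | zero => simp
  | succ k ihk =>
    induction l with
    | zero => simp
    | succ l ihl =>
      have hk := ihk (l + 1)
      rw [show k + (l + 1) = k + 1 + l by ring, qPochFin_succ Q Q l] at hk
      rw [qPochFin_succ Q Q k] at ihl
      rw [show k + 1 + (l + 1) = k + 1 + l + 1 by ring, qBinom_succ_succ, qPochFin_succ Q Q k,
        qPochFin_succ Q Q l, qPochFin_succ Q Q (k + 1 + l)]
      linear_combination (1 - Q * Q ^ k) * hk + Q ^ (k + 1) * (1 - Q * Q ^ l) * ihl

end GaussianBinomial

section FiniteTripleProduct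

variable {K : Type*} [Field K] {q t : K}

lemma prod_one_add_pow_mul_inv (hq : q ≠ 0) (ht : t ≠ 0) (N : ℕ) :
    ∏ j ∈ range N, (1 + q ^ (2 * j + 1) * t⁻¹)
      = q ^ (N ^ 2) * (t ^ N)⁻¹ * ∏ j ∈ range N, (1 + (q ^ (2 * j + 1))⁻¹ * t) := by
  induction N with
  | zero => simp
  | succ N ih =>
    rw [prod_range_succ, prod_range_succ, ih, show (N + 1) ^ 2 = N ^ 2 + (2 * N + 1) by ring]
    field_simp
    ring

lemma prod_range_two_mul_one_add (hq : q ≠ 0) (N : ℕ) :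
    ∏ i ∈ range (2 * N), (1 + q * t / (q ^ 2) ^ N * (q ^ 2) ^ i)
      = (∏ j ∈ range N, (1 + (q ^ (2 * j + 1))⁻¹ * t))
        * ∏ j ∈ range N, (1 + q ^ (2 * j + 1) * t) := by
  rw [two_mul, prod_range_add (fun i ↦ 1 + q * t / (q ^ 2) ^ N * (q ^ 2) ^ i),
    ← prod_range_reflect (fun i ↦ 1 + q * t / (q ^ 2) ^ N * (q ^ 2) ^ i) N]
  congr 1 <;> refine prod_congr rfl fun j hj ↦ ?_
  · have : q * (q ^ 2) ^ (N - 1 - j) * q ^ (2 * j + 1) = (q ^ 2) ^ N := by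
      rw [← pow_mul, ← pow_mul, ← pow_succ', ← pow_add]
      congr 1
      have := mem_range.mp hj
      omega
    field_simp
    rw [← this]
    ring
  · rw [pow_add]
    field_simp
    ring

lemma two_mul_choose_two_add (k : ℕ) : 2 * k.choose 2 + k = k ^ 2 := by
  induction k with
  | zero => rfl
  | succ k ih => rw [Nat.choose_succ_succ, Nat.choose_one_right]; nlinarith

lemma zpow_sub_sq_mul_zpow_sub (hq : q ≠ 0) (ht : t ≠ 0) (N k : ℕ) :
    q ^ (((k : ℤ) - N) ^ 2) * t ^ ((k : ℤ) - N)
      = q ^ (N ^ 2) * (t ^ N)⁻¹ * ((q ^ 2) ^ k.choose 2 * (q * t / (q ^ 2) ^ N) ^ k) := by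
  have hsq : ((k : ℤ) - N) ^ 2 = ((N ^ 2 + k ^ 2 : ℕ) : ℤ) - ((2 * N * k : ℕ) : ℤ) := by
    push_cast; ring
  rw [hsq, zpow_sub₀ hq, zpow_sub₀ ht, zpow_natCast, zpow_natCast, zpow_natCast, zpow_natCast,
    ← two_mul_choose_two_add k, pow_add, pow_add, pow_mul, div_pow, mul_pow, ← pow_mul, mul_assoc 2]
  field_simp
  ring

theorem jacobi_triple_product_finite (hq : q ≠ 0) (ht : t ≠ 0) (N : ℕ) :
    qPochFin (-(q * t)) (q ^ 2) N * qPochFin (-(q * t⁻¹)) (q ^ 2) N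
      = ∑ n ∈ Icc (-(N : ℤ)) N, qBinom (q ^ 2) (2 * N) (N + n).toNat * q ^ (n ^ 2) * t ^ n := by
  have hfactor (u : K) (j : ℕ) : 1 - -(q * u) * (q ^ 2) ^ j = 1 + q ^ (2 * j + 1) * u := by ring
  simp only [qPochFin, hfactor]
  rw [prod_one_add_pow_mul_inv hq ht, mul_left_comm, mul_comm (∏ j ∈ range N, _),
    ← prod_range_two_mul_one_add hq,
    prod_one_add_mul_pow_eq_sum_qBinom, mul_sum]
  refine sum_nbij' (fun k ↦ (k : ℤ) - N) (fun n ↦ (N + n).toNat) ?_ ?_ ?_ ?_ ?_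
  · intro k hk; simp only [mem_range, mem_Icc] at *; omega
  · intro n hn; simp only [mem_range, mem_Icc] at *; omega
  · intro k _; omega
  · intro n hn; simp only [mem_Icc] at hn; omega
  · intro k _
    rw [show ((N : ℤ) + (k - N)).toNat = k by omega, mul_assoc _ (q ^ _),
      zpow_sub_sq_mul_zpow_sub hq ht]
    ring

end FiniteTripleProduct

section Pochhammer

variable {𝕜 : Type*} [NormedField 𝕜] {Q : 𝕜}

lemma summable_norm_mul_pow (a : 𝕜) (hQ : ‖Q‖ < 1) : Summable fun k : ℕ ↦ ‖a * Q ^ k‖ := by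
  simpa [norm_mul, norm_pow] using
    (summable_geometric_of_lt_one (norm_nonneg Q) hQ).mul_left ‖a‖

lemma one_sub_pow_ne_zero (hQ : ‖Q‖ < 1) {k : ℕ} (hk : k ≠ 0) : 1 - Q ^ k ≠ 0 := by
  refine sub_ne_zero.mpr fun h ↦ ?_
  have := pow_lt_one₀ (norm_nonneg Q) hQ hk
  rw [← norm_pow, ← h, norm_one] at this
  exact lt_irrefl _ this

lemma qPochFin_self_ne_zero (hQ : ‖Q‖ < 1) (n : ℕ) : qPochFin Q Q n ≠ 0 :=
  prod_ne_zero_iff.mpr fun k _ ↦ by rw [← pow_succ']; exact one_sub_pow_ne_zero hQ k.succ_ne_zero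

variable [CompleteSpace 𝕜]

lemma tendsto_qPochFin (a : 𝕜) (hQ : ‖Q‖ < 1) :
    Tendsto (qPochFin a Q) atTop (𝓝 (∏' k : ℕ, (1 - a * Q ^ k))) := by
  have : Multipliable fun k : ℕ ↦ 1 - a * Q ^ k := by
    simpa [sub_eq_add_neg] using multipliable_one_add_of_summable (f := fun k ↦ -(a * Q ^ k))
      (by simpa using summable_norm_mul_pow a hQ)
  exact this.hasProd.tendsto_prod_nat

lemma tprod_one_sub_mul_pow_ne_zero {a : 𝕜} (hQ : ‖Q‖ < 1) (h : ∀ k : ℕ, 1 - a * Q ^ k ≠ 0) :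
    ∏' k : ℕ, (1 - a * Q ^ k) ≠ 0 := by
  simpa [sub_eq_add_neg] using tprod_one_add_ne_zero_of_summable (f := fun k ↦ -(a * Q ^ k))
    (by simpa [sub_eq_add_neg] using h) (by simpa using summable_norm_mul_pow a hQ)

lemma tprod_one_sub_self_mul_pow_ne_zero (hQ : ‖Q‖ < 1) : ∏' k : ℕ, (1 - Q * Q ^ k) ≠ 0 :=
  tprod_one_sub_mul_pow_ne_zero hQ fun k ↦ by
    rw [← pow_succ']; exact one_sub_pow_ne_zero hQ k.succ_ne_zero

end Pochhammer

section Bounds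

variable {𝕜 : Type*} [NormedField 𝕜] {Q : 𝕜}

lemma qPochFin_self_pos {r : ℝ} (hr0 : 0 ≤ r) (hr : r < 1) (k : ℕ) : 0 < qPochFin r r k :=
  prod_pos fun i _ ↦ sub_pos.mpr (by
    rw [← pow_succ']; exact pow_lt_one₀ hr0 hr i.succ_ne_zero)

lemma norm_qBinom_le (hQ : ‖Q‖ < 1) (m k : ℕ) : ‖qBinom Q m k‖ ≤ (qPochFin ‖Q‖ ‖Q‖ k)⁻¹ := by
  have hpos := qPochFin_self_pos (norm_nonneg Q) hQ
  induction m generalizing k with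
  | zero => cases k <;> simp [(hpos _).le]
  | succ m ih =>
    cases k with
    | zero => simp
    | succ k =>
      have hk : 1 - ‖Q‖ * ‖Q‖ ^ k ≠ 0 := by
        rw [← pow_succ']; exact one_sub_pow_ne_zero ((norm_norm Q).symm ▸ hQ) k.succ_ne_zero
      calc ‖qBinom Q (m + 1) (k + 1)‖
          ≤ ‖qBinom Q m k‖ + ‖Q‖ ^ (k + 1) * ‖qBinom Q m (k + 1)‖ := by
            rw [qBinom_succ_succ, ← norm_pow, ← norm_mul]; exact norm_add_le _ _
        _ ≤ (qPochFin ‖Q‖ ‖Q‖ k)⁻¹ + ‖Q‖ ^ (k + 1) * (qPochFin ‖Q‖ ‖Q‖ (k + 1))⁻¹ := by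
            gcongr <;> exact ih _
        _ = (qPochFin ‖Q‖ ‖Q‖ (k + 1))⁻¹ := by
            rw [qPochFin_succ]; field_simp; ring

lemma exists_norm_qBinom_le (hQ : ‖Q‖ < 1) : ∃ C, ∀ m k, ‖qBinom Q m k‖ ≤ C := by
  have hr : ‖‖Q‖‖ < 1 := by rwa [norm_norm]
  have hlim := (tendsto_qPochFin ‖Q‖ hr).inv₀ (tprod_one_sub_self_mul_pow_ne_zero hr)
  obtain ⟨C, hC⟩ := isBounded_iff_forall_norm_le.mp (Metric.isBounded_range_of_tendsto _ hlim)
  exact ⟨C, fun m k ↦ (norm_qBinom_le hQ m k).trans ((le_abs_self _).trans (hC _ ⟨k, rfl⟩))⟩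

variable [CompleteSpace 𝕜]

lemma tendsto_qBinom_two_mul (hQ : ‖Q‖ < 1) (n : ℤ) :
    Tendsto (fun N : ℕ ↦ qBinom Q (2 * N) (N + n).toNat) atTop
      (𝓝 (∏' k : ℕ, (1 - Q * Q ^ k))⁻¹) := by
  have hP := tendsto_qPochFin Q hQ
  have hP0 := tprod_one_sub_self_mul_pow_ne_zero hQ
  have hshift (c : ℤ) : Tendsto (fun N : ℕ ↦ (N + c).toNat) atTop atTop :=
    tendsto_atTop_atTop.mpr fun b ↦ ⟨b + c.natAbs, fun N hN ↦ by omega⟩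
  have h2N : Tendsto (fun N : ℕ ↦ 2 * N) atTop atTop :=
    tendsto_atTop_atTop.mpr fun b ↦ ⟨b, fun N hN ↦ by omega⟩
  have hquot := (hP.comp h2N).div ((hP.comp (hshift n)).mul (hP.comp (hshift (-n))))
    (mul_ne_zero hP0 hP0)
  rw [div_mul_cancel_left₀ hP0] at hquot
  refine hquot.congr' ?_
  filter_upwards [eventually_ge_atTop n.natAbs] with N hN
  have hclosed := qBinom_add_mul_qPochFin Q (N + n).toNat (N + -n).toNat
  rw [show (N + n).toNat + (N + -n).toNat = 2 * N by omega] at hclosed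
  simp only [Pi.div_apply, Function.comp_apply]
  rw [← hclosed, mul_assoc, mul_div_cancel_right₀ _ (mul_ne_zero (qPochFin_self_ne_zero hQ _)
    (qPochFin_self_ne_zero hQ _))]

end Bounds

noncomputable def thetaTerm (q t : ℂ) (n : ℤ) : ℂ := q ^ (n ^ 2) * t ^ n

section TripleProduct

variable {q t : ℂ}

open Complex in
lemma summable_norm_thetaTerm (hq0 : q ≠ 0) (hq : ‖q‖ < 1) (ht : t ≠ 0) :
    Summable fun n ↦ ‖thetaTerm q t n‖ := by
  -- With `q = exp (πiτ)`, `t = exp (2πiz)` these are the terms of `jacobiTheta₂ z τ`, `0 < Im τ`.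
  have him : 0 < (log q / (Real.pi * I)).im := by
    have hre : (log q / (Real.pi * I)).im = -Real.log ‖q‖ / Real.pi := by
      simp only [div_mul_eq_div_div, div_I, neg_im, mul_im, div_ofReal_re, log_re, I_im, mul_one,
        div_ofReal_im, I_re, mul_zero, add_zero]
      ring
    rw [hre]
    exact div_pos (neg_pos.mpr (Real.log_neg (norm_pos_iff.mpr hq0) hq)) Real.pi_pos
  refine summable_norm_iff.mpr (((summable_jacobiTheta₂_term_iff
    (log t / (2 * Real.pi * I)) _).mpr him).congr fun n ↦ ?_)
  have hπ : (Real.pi : ℂ) * I ≠ 0 := by simp [Real.pi_ne_zero]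
  rw [thetaTerm, jacobiTheta₂_term, show 2 * Real.pi * I * n * (log t / (2 * Real.pi * I))
      + Real.pi * I * n ^ 2 * (log q / (Real.pi * I)) = ((n ^ 2 : ℤ) : ℂ) * log q + n * log t by
    push_cast; field_simp; ring, exp_add, exp_int_mul, exp_int_mul, exp_log hq0, exp_log ht]

theorem jacobi_triple_product (hq0 : q ≠ 0) (hq : ‖q‖ < 1) (ht : t ≠ 0) :
    qPoch (q ^ 2) (q ^ 2) * theta (-(q * t)) (q ^ 2) = ∑' n, thetaTerm q t n := by
  have hQ : ‖q ^ 2‖ < 1 := by rw [norm_pow]; exact pow_lt_one₀ (norm_nonneg q) hq two_ne_zero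
  have hP0 : qPoch (q ^ 2) (q ^ 2) ≠ 0 := tprod_one_sub_self_mul_pow_ne_zero hQ
  have hprod : Tendsto (fun N ↦ qPochFin (-(q * t)) (q ^ 2) N * qPochFin (-(q * t⁻¹)) (q ^ 2) N)
      atTop (𝓝 (theta (-(q * t)) (q ^ 2))) := by
    rw [theta, show q ^ 2 / -(q * t) = -(q * t⁻¹) by field_simp]
    exact (tendsto_qPochFin _ hQ).mul (tendsto_qPochFin _ hQ)
  set F : ℕ → ℤ → ℂ := fun N ↦ Set.indicator (Icc (-(N : ℤ)) N : Set ℤ)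
    fun n ↦ qBinom (q ^ 2) (2 * N) (N + n).toNat * thetaTerm q t n
  obtain ⟨C, hC⟩ := exists_norm_qBinom_le hQ
  have hsum : Tendsto (fun N ↦ ∑' n, F N n) atTop
      (𝓝 (∑' n, (qPoch (q ^ 2) (q ^ 2))⁻¹ * thetaTerm q t n)) := by
    refine tendsto_tsum_of_dominated_convergence
      ((summable_norm_thetaTerm hq0 hq ht).mul_left C) (fun n ↦ ?_)
      (Eventually.of_forall fun N n ↦ ?_)
    · refine ((tendsto_qBinom_two_mul hQ n).mul_const (thetaTerm q t n)).congr' ?_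
      filter_upwards [eventually_ge_atTop n.natAbs] with N hN
      simp only [F]
      rw [Set.indicator_of_mem (by simp only [coe_Icc, Set.mem_Icc]; omega)]
    · refine (norm_indicator_le_norm_self _ _).trans ?_
      rw [norm_mul]
      exact mul_le_mul_of_nonneg_right (hC _ _) (norm_nonneg _)
  have hlim := tendsto_nhds_unique hprod (hsum.congr fun N ↦ by
    rw [← sum_eq_tsum_indicator, jacobi_triple_product_finite hq0 ht]
    simp only [thetaTerm, mul_assoc])
  rw [hlim, tsum_mul_left, mul_inv_cancel_left₀ hP0]

end TripleProduct

local notation "ℤ⁴" => ((ℤ × ℤ) × ℤ) × ℤ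

noncomputable def thetaTerm4 (q a b c d : ℂ) (v : ℤ⁴) : ℂ :=
  thetaTerm q a v.1.1.1 * thetaTerm q b v.1.1.2 * thetaTerm q c v.1.2 * thetaTerm q d v.2

def coordSum (v : ℤ⁴) : ℤ := v.1.1.1 + v.1.1.2 + v.1.2 + v.2

def reflect (m : ℤ) (v : ℤ⁴) : ℤ⁴ := (((m - v.1.1.1, m - v.1.1.2), m - v.1.2), m - v.2)

def reflectEquiv : ℤ⁴ ≃ ℤ⁴ where
  toFun v := reflect ((coordSum v + 1) / 2) v
  invFun v := reflect (coordSum v / 2) v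
  left_inv v := by simp only [reflect, coordSum, Prod.ext_iff]; omega
  right_inv v := by simp only [reflect, coordSum, Prod.ext_iff]; omega

variable {q : ℂ}

lemma thetaTerm_mul (k t : ℂ) (n : ℤ) : thetaTerm q (k * t) n = k ^ n * thetaTerm q t n := by
  simp only [thetaTerm, mul_zpow]; ring

lemma thetaTerm_sub (hq : q ≠ 0) {t : ℂ} (ht : t ≠ 0) (m n : ℤ) :
    thetaTerm q t (m - n) = thetaTerm q t m * thetaTerm q (q ^ (2 * m) * t)⁻¹ n := by
  simp only [thetaTerm]
  rw [show (m - n) ^ 2 = m ^ 2 + n ^ 2 + 2 * m * (-n) by ring, zpow_add₀ hq, zpow_add₀ hq,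
    zpow_mul, zpow_sub₀ ht, inv_zpow', mul_zpow, zpow_neg t]
  ring

lemma thetaTerm4_mul {k : ℂ} (hk : k ≠ 0) (a b c d : ℂ) (v : ℤ⁴) :
    thetaTerm4 q (k * a) (k * b) (k * c) (k * d) v = k ^ coordSum v * thetaTerm4 q a b c d v := by
  simp only [thetaTerm4, thetaTerm_mul, coordSum, zpow_add₀ hk]
  ring

lemma thetaTerm4_reflect (hq : q ≠ 0) {p a b c d a' b' c' d' : ℂ} (hp : p ≠ 0)
    (ha : a * a' = p) (hb : b * b' = p) (hc : c * c' = p) (hd : d * d' = p)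
    (hpabcd : p ^ 2 = a * b * c * d) (m : ℤ) (v : ℤ⁴) :
    thetaTerm4 q a b c d (reflect m v)
      = (q ^ (2 * m) * p) ^ (2 * m - coordSum v) * thetaTerm4 q a' b' c' d' v := by
  have ha0 := left_ne_zero_of_mul (ha ▸ hp)
  have hb0 := left_ne_zero_of_mul (hb ▸ hp)
  have hc0 := left_ne_zero_of_mul (hc ▸ hp)
  have hd0 := left_ne_zero_of_mul (hd ▸ hp)
  have hinv {e e' : ℂ} (hee' : e * e' = p) : (q ^ (2 * m) * e)⁻¹ = (q ^ (2 * m) * p)⁻¹ * e' := by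
    have he' := right_ne_zero_of_mul (hee' ▸ hp)
    rw [← hee']; field_simp
  have hscale : q ^ (2 * m) * p ≠ 0 := mul_ne_zero (zpow_ne_zero _ hq) hp
  have hcentre : thetaTerm q a m * thetaTerm q b m * thetaTerm q c m * thetaTerm q d m
      = (q ^ (2 * m) * p) ^ (2 * m) := calc
    _ = (q ^ (m ^ 2)) ^ 4 * (p ^ 2) ^ m := by
      simp only [thetaTerm, hpabcd, mul_zpow]; ring
    _ = _ := by
      rw [mul_zpow, zpow_mul p, zpow_two p, ← sq, ← zpow_natCast, ← zpow_mul, ← zpow_mul]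
      ring_nf
  rw [zpow_sub₀ hscale, ← hcentre, coordSum, zpow_add₀ hscale, zpow_add₀ hscale, zpow_add₀ hscale]
  simp only [thetaTerm4, reflect, thetaTerm_sub hq ha0, thetaTerm_sub hq hb0, thetaTerm_sub hq hc0,
    thetaTerm_sub hq hd0, hinv ha, hinv hb, hinv hc, hinv hd, thetaTerm_mul, inv_zpow]
  field_simp

lemma two_mul_thetaTerm4_reflectEquiv (hq : q ≠ 0) {p a b c d a' b' c' d' : ℂ} (hp : p ≠ 0)
    (ha : a * a' = p) (hb : b * b' = p) (hc : c * c' = p) (hd : d * d' = p)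
    (hpabcd : p ^ 2 = a * b * c * d) (v : ℤ⁴) :
    2 * thetaTerm4 q a b c d (reflectEquiv v)
      = (-(q * p) * (-q) ^ coordSum v + q * p * q ^ coordSum v + 1 + (-1) ^ coordSum v)
        * thetaTerm4 q a' b' c' d' v := by
  rw [reflectEquiv, Equiv.coe_fn_mk, thetaTerm4_reflect hq hp ha hb hc hd hpabcd]
  obtain ⟨j, hj | hj⟩ := Int.even_or_odd' (coordSum v)
  · rw [hj, show (2 * j + 1) / 2 = j by omega, sub_self, zpow_zero, Even.neg_zpow ⟨j, two_mul j⟩,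
      Even.neg_one_zpow ⟨j, two_mul j⟩]
    ring
  · rw [hj, show (2 * j + 1 + 1) / 2 = j + 1 by omega, show 2 * (j + 1) - (2 * j + 1) = 1 by ring,
      zpow_one, Odd.neg_zpow ⟨j, rfl⟩, Odd.neg_one_zpow ⟨j, rfl⟩,
      show 2 * (j + 1) = 2 * j + 1 + 1 by ring, zpow_add_one₀ hq]
    ring

lemma hasSum_thetaTerm4 (hq0 : q ≠ 0) (hq : ‖q‖ < 1) {a b c d : ℂ}
    (ha : a ≠ 0) (hb : b ≠ 0) (hc : c ≠ 0) (hd : d ≠ 0) :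
    HasSum (thetaTerm4 q a b c d) ((∑' n, thetaTerm q a n) * (∑' n, thetaTerm q b n)
      * (∑' n, thetaTerm q c n) * (∑' n, thetaTerm q d n)) := by
  have hs {t : ℂ} (ht : t ≠ 0) := summable_norm_thetaTerm hq0 hq ht
  have hab := (hs ha).mul_norm (hs hb)
  have habc := hab.mul_norm (hs hc)
  rw [tsum_mul_tsum_of_summable_norm (hs ha) (hs hb), tsum_mul_tsum_of_summable_norm hab (hs hc),
    tsum_mul_tsum_of_summable_norm habc (hs hd)]
  exact (habc.mul_norm (hs hd)).of_norm.hasSum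

lemma hasSum_qPoch_pow_four_mul_theta (hq0 : q ≠ 0) (hq : ‖q‖ < 1) {k a b c d : ℂ} (hk : k ≠ 0)
    (ha : a ≠ 0) (hb : b ≠ 0) (hc : c ≠ 0) (hd : d ≠ 0) :
    HasSum (fun v ↦ k ^ coordSum v * thetaTerm4 q a b c d v)
      (qPoch (q ^ 2) (q ^ 2) ^ 4 * (theta (-(q * (k * a))) (q ^ 2) * theta (-(q * (k * b))) (q ^ 2)
        * theta (-(q * (k * c))) (q ^ 2) * theta (-(q * (k * d))) (q ^ 2))) := by
  have hsum := hasSum_thetaTerm4 hq0 hq (mul_ne_zero hk ha) (mul_ne_zero hk hb)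
    (mul_ne_zero hk hc) (mul_ne_zero hk hd)
  rw [← jacobi_triple_product hq0 hq (mul_ne_zero hk ha), ← jacobi_triple_product hq0 hq
    (mul_ne_zero hk hb), ← jacobi_triple_product hq0 hq (mul_ne_zero hk hc),
    ← jacobi_triple_product hq0 hq (mul_ne_zero hk hd)] at hsum
  convert hsum using 1
  · exact funext fun v ↦ (thetaTerm4_mul hk a b c d v).symm
  · ring

/-- Product form of the second Whittaker–Watson addition formula
`2ϑ₃(w)ϑ₃(x)ϑ₃(y)ϑ₃(z) = -ϑ₁(w')ϑ₁(x')ϑ₁(y')ϑ₁(z') + ϑ₂(w')ϑ₂(x')ϑ₂(y')ϑ₂(z')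
  + ϑ₃(w')ϑ₃(x')ϑ₃(y')ϑ₃(z') + ϑ₄(w')ϑ₄(x')ϑ₄(y')ϑ₄(z')`. -/
theorem whittaker_watson_addition_second (q : ℂ) (hq0 : q ≠ 0) (hq : ‖q‖ < 1)
    (w x y z : ℂ) (hw : w ≠ 0) (hx : x ≠ 0) (hy : y ≠ 0) (hz : z ≠ 0) :
    2 * (theta (-(q * w ^ 2)) (q ^ 2) * theta (-(q * x ^ 2)) (q ^ 2)
        * theta (-(q * y ^ 2)) (q ^ 2) * theta (-(q * z ^ 2)) (q ^ 2))
      = -(q * w * x * y * z)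
            * (theta (q ^ 2 * x * y * z / w) (q ^ 2) * theta (q ^ 2 * w * y * z / x) (q ^ 2)
              * theta (q ^ 2 * w * x * z / y) (q ^ 2) * theta (q ^ 2 * w * x * y / z) (q ^ 2))
        + q * w * x * y * z
            * (theta (-(q ^ 2 * x * y * z / w)) (q ^ 2) * theta (-(q ^ 2 * w * y * z / x)) (q ^ 2)
              * theta (-(q ^ 2 * w * x * z / y)) (q ^ 2) * theta (-(q ^ 2 * w * x * y / z)) (q ^ 2))
        + theta (-(q * x * y * z / w)) (q ^ 2) * theta (-(q * w * y * z / x)) (q ^ 2)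
            * theta (-(q * w * x * z / y)) (q ^ 2) * theta (-(q * w * x * y / z)) (q ^ 2)
        + theta (q * x * y * z / w) (q ^ 2) * theta (q * w * y * z / x) (q ^ 2)
            * theta (q * w * x * z / y) (q ^ 2) * theta (q * w * x * y / z) (q ^ 2) := by
  have hQ : ‖q ^ 2‖ < 1 := by rw [norm_pow]; exact pow_lt_one₀ (norm_nonneg q) hq two_ne_zero
  have hP : qPoch (q ^ 2) (q ^ 2) ≠ 0 := tprod_one_sub_self_mul_pow_ne_zero hQ
  have hsum (k : ℂ) (hk : k ≠ 0) := hasSum_qPoch_pow_four_mul_theta hq0 hq hk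
    (a := x * y * z / w) (b := w * y * z / x) (c := w * x * z / y) (d := w * x * y / z)
    (by positivity) (by positivity) (by positivity) (by positivity)
  have hRHS := ((((hsum (-q) (neg_ne_zero.mpr hq0)).mul_left (-(q * w * x * y * z))).add
    ((hsum q hq0).mul_left (q * w * x * y * z))).add (hsum 1 one_ne_zero)).add
    (hsum (-1) (neg_ne_zero.mpr one_ne_zero))
  have hLHS := (Equiv.hasSum_iff reflectEquiv).mpr ((hasSum_qPoch_pow_four_mul_theta hq0 hq
    one_ne_zero (pow_ne_zero 2 hw) (pow_ne_zero 2 hx) (pow_ne_zero 2 hy)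
    (pow_ne_zero 2 hz)).mul_left 2)
  replace hRHS := hRHS.congr_fun (g := (fun v ↦ 2 * (1 ^ coordSum v
      * thetaTerm4 q (w ^ 2) (x ^ 2) (y ^ 2) (z ^ 2) v)) ∘ reflectEquiv) fun v ↦ by
    simp only [Function.comp_apply, one_zpow, one_mul]
    rw [two_mul_thetaTerm4_reflectEquiv hq0
      (a' := x * y * z / w) (b' := w * y * z / x) (c' := w * x * z / y) (d' := w * x * y / z)
      (p := w * x * y * z) (by positivity) (by field_simp) (by field_simp) (by field_simp)
      (by field_simp) (by ring)]
    ring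
  refine mul_left_cancel₀ (pow_ne_zero 4 hP) ?_
  -- `ring_nf` also normalises the arguments of `theta`, e.g. `-(q * (-q * (x * y * z / w)))`.
  linear_combination (norm := ring_nf) hLHS.unique hRHS
end
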